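/- arXiv:1904.05995 — 5 statements merged into one kernel-verified Lean document; each statement's English description precedes it below -/
import Mathlib

section
/- In a finite connected graph G with n vertices, the sum over all edges {u,v} of the effective resistance R_{u,v}(G) equals n - 1 (Foster's theorem). -/
open Matrix

/-- Effective resistance, defined via the graph Laplacian (Dirichlet principle): the inverse
of the minimum Dirichlet energy `φᵀ L φ` over potentials with `φ s = 1`, `φ t = 0`. -/
noncomputable def effRes {V : Type*} [Fintype V] [DecidableEq V] (G : SimpleGraph V)
    [DecidableRel G.Adj] (s t : V) : ℝ :=
  (sInf {E : ℝ | ∃ φ : V → ℝ, φ s = 1 ∧ φ t = 0 ∧ E = φ ⬝ᵥ (G.lapMatrix ℝ *ᵥ φ)})⁻¹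

set_option linter.unusedSectionVars false
open Finset
namespace FosterAux

variable {V : Type*} [Fintype V] [DecidableEq V] (G : SimpleGraph V) [DecidableRel G.Adj]

/-- all-ones matrix -/
def Jm (V : Type*) [Fintype V] : Matrix V V ℝ := Matrix.of fun _ _ => 1

noncomputable def Mm : Matrix V V ℝ :=
  G.lapMatrix ℝ + ((Fintype.card V : ℝ))⁻¹ • Jm V

lemma L_mul_J : G.lapMatrix ℝ * Jm V = 0 := by
  ext u v
  have := congrFun (G.lapMatrix_mulVec_const_eq_zero (R := ℝ)) u
  simpa [Matrix.mul_apply, Jm, Matrix.mulVec, dotProduct] using this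

lemma J_mul_L : Jm V * G.lapMatrix ℝ = 0 := by
  have h := congrArg Matrix.transpose (L_mul_J G)
  rw [Matrix.transpose_mul, (G.isSymm_lapMatrix ℝ).eq, Matrix.transpose_zero] at h
  have hJ : (Jm V)ᵀ = Jm V := by ext u v; rfl
  rwa [hJ] at h

lemma J_mul_J : Jm V * Jm V = (Fintype.card V : ℝ) • Jm V := by
  ext u v
  show (∑ _w : V, (1:ℝ) * 1) = (Fintype.card V : ℝ) * 1
  simp [Finset.card_univ]


lemma dot_energy (x : V → ℝ) :
    x ⬝ᵥ (G.lapMatrix ℝ *ᵥ x) = Matrix.toLinearMap₂' ℝ (G.lapMatrix ℝ) x x := by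
  rw [Matrix.toLinearMap₂'_apply']

lemma energy_nonneg (x : V → ℝ) : 0 ≤ x ⬝ᵥ (G.lapMatrix ℝ *ᵥ x) := by
  simpa using (SimpleGraph.posSemidef_lapMatrix ℝ G).dotProduct_mulVec_nonneg x

lemma J_mulVec (x : V → ℝ) : Jm V *ᵥ x = fun _ => ∑ w, x w := by
  ext u; simp [Jm, Matrix.mulVec, dotProduct]

lemma posDef_Mm (hG : G.Connected) : (Mm G).PosDef := by
  have hn : (0:ℝ) < (Fintype.card V : ℝ) := by
    have := hG.nonempty
    exact_mod_cast Fintype.card_pos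
  refine Matrix.PosDef.of_dotProduct_mulVec_pos ?_ ?_
  · rw [Matrix.IsHermitian, Matrix.conjTranspose_eq_transpose_of_trivial, Mm,
      Matrix.transpose_add, (G.isSymm_lapMatrix ℝ).eq, Matrix.transpose_smul]
    congr 1
  · intro x hx
    simp only [star_trivial]
    rw [Mm, Matrix.add_mulVec, dotProduct_add, Matrix.smul_mulVec,
      dotProduct_smul, J_mulVec, smul_eq_mul]
    have h2 : x ⬝ᵥ (fun _ => ∑ w, x w) = (∑ w, x w) ^ 2 := by
      simp [dotProduct, ← Finset.sum_mul, sq, mul_comm]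
    rw [h2]
    rcases eq_or_lt_of_le (energy_nonneg G x) with h | h
    · have hc : ∀ i j : V, x i = x j := by
        intro i j
        have := (G.lapMatrix_toLinearMap₂'_apply'_eq_zero_iff_forall_reachable x).mp
          (by rw [← dot_energy]; exact h.symm)
        exact this i j (hG.preconnected i j)
      obtain ⟨v⟩ := hG.nonempty
      have hxv : x v ≠ 0 := by
        intro h0
        apply hx
        ext w
        rw [hc w v, h0]; rfl
      have hsum : (∑ w, x w) = (Fintype.card V : ℝ) * x v := by
        rw [show (∑ w, x w) = ∑ _w : V, x v from Finset.sum_congr rfl fun w _ => hc w v,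
          Finset.sum_const, nsmul_eq_mul, Finset.card_univ]
      have hpos : (0:ℝ) < (∑ w, x w) ^ 2 := by
        rw [hsum]; positivity
      have : 0 < ((Fintype.card V : ℝ))⁻¹ * (∑ w, x w) ^ 2 := by positivity
      linarith
    · have : 0 ≤ ((Fintype.card V : ℝ))⁻¹ * (∑ w, x w) ^ 2 := by positivity
      linarith


noncomputable def Hm : Matrix V V ℝ := (Mm G)⁻¹ - ((Fintype.card V : ℝ))⁻¹ • Jm V

variable (hG : G.Connected)
include hG

lemma ncard_ne : (Fintype.card V : ℝ) ≠ 0 := by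
  have := hG.nonempty
  exact_mod_cast Fintype.card_pos.ne'

lemma isUnit_det_Mm : IsUnit (Mm G).det :=
  isUnit_iff_ne_zero.mpr (posDef_Mm G hG).det_pos.ne'

lemma J_mul_Mm : Jm V * Mm G = Jm V := by
  rw [Mm, Matrix.mul_add, J_mul_L, Matrix.mul_smul, J_mul_J, smul_smul,
    inv_mul_cancel₀ (ncard_ne G hG), one_smul, zero_add]

lemma Mm_mul_J : Mm G * Jm V = Jm V := by
  rw [Mm, Matrix.add_mul, L_mul_J, Matrix.smul_mul, J_mul_J, smul_smul,
    inv_mul_cancel₀ (ncard_ne G hG), one_smul, zero_add]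

lemma J_mul_Minv : Jm V * (Mm G)⁻¹ = Jm V := by
  conv_lhs => rw [← J_mul_Mm G hG]
  rw [Matrix.mul_assoc, Matrix.mul_nonsing_inv _ (isUnit_det_Mm G hG), Matrix.mul_one]

lemma Minv_mul_J : (Mm G)⁻¹ * Jm V = Jm V := by
  conv_lhs => rw [← Mm_mul_J G hG]
  rw [← Matrix.mul_assoc, Matrix.nonsing_inv_mul _ (isUnit_det_Mm G hG), Matrix.one_mul]

lemma L_mul_Hm : G.lapMatrix ℝ * Hm G = 1 - ((Fintype.card V : ℝ))⁻¹ • Jm V := by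
  rw [Hm, Matrix.mul_sub, Matrix.mul_smul, L_mul_J, smul_zero, sub_zero]
  have : G.lapMatrix ℝ = Mm G - ((Fintype.card V : ℝ))⁻¹ • Jm V := by
    rw [Mm, add_sub_cancel_right]
  rw [this, Matrix.sub_mul, Matrix.mul_nonsing_inv _ (isUnit_det_Mm G hG),
    Matrix.smul_mul, J_mul_Minv G hG]

lemma J_mul_Hm : Jm V * Hm G = 0 := by
  rw [Hm, Matrix.mul_sub, J_mul_Minv G hG, Matrix.mul_smul, J_mul_J, smul_smul,
    inv_mul_cancel₀ (ncard_ne G hG), one_smul, sub_self]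

lemma isSymm_Hm : (Hm G)ᵀ = Hm G := by
  have hM : (Mm G)ᵀ = Mm G := by
    rw [Mm, Matrix.transpose_add, (G.isSymm_lapMatrix ℝ).eq, Matrix.transpose_smul]
    congr 1
  rw [Hm, Matrix.transpose_sub, Matrix.transpose_nonsing_inv, hM, Matrix.transpose_smul]
  congr 1

lemma Hm_mul_L : Hm G * G.lapMatrix ℝ = 1 - ((Fintype.card V : ℝ))⁻¹ • Jm V := by
  have h := congrArg Matrix.transpose (L_mul_Hm G hG)
  rw [Matrix.transpose_mul, isSymm_Hm G hG, (G.isSymm_lapMatrix ℝ).eq, Matrix.transpose_sub,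
    Matrix.transpose_one, Matrix.transpose_smul] at h
  rw [h]
  congr 2

lemma Hm_mul_L_mul_Hm : Hm G * G.lapMatrix ℝ * Hm G = Hm G := by
  rw [Hm_mul_L G hG, Matrix.sub_mul, Matrix.one_mul, Matrix.smul_mul, J_mul_Hm G hG,
    smul_zero, sub_zero]


omit hG

def bv (s t : V) : V → ℝ := fun w => (if w = s then 1 else 0) - (if w = t then 1 else 0)

lemma dot_bv (s t : V) (x : V → ℝ) : x ⬝ᵥ bv s t = x s - x t := by
  simp [bv, dotProduct, mul_sub, Finset.sum_sub_distrib, mul_ite, mul_one, mul_zero,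
    Finset.sum_ite_eq']

lemma bv_dot (s t : V) (x : V → ℝ) : bv s t ⬝ᵥ x = x s - x t := by
  simp [bv, dotProduct, sub_mul, Finset.sum_sub_distrib, ite_mul, one_mul, zero_mul,
    Finset.sum_ite_eq]

lemma sum_bv (s t : V) : ∑ w, bv s t w = 0 := by
  simp [bv, Finset.sum_sub_distrib, Finset.sum_ite_eq]

lemma dot_symm (A : Matrix V V ℝ) (hA : Aᵀ = A) (x z : V → ℝ) :
    x ⬝ᵥ (A *ᵥ z) = (A *ᵥ x) ⬝ᵥ z := by
  rw [Matrix.dotProduct_mulVec, ← Matrix.mulVec_transpose, hA]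

include hG

lemma L_mulVec_Hm_bv (s t : V) :
    G.lapMatrix ℝ *ᵥ (Hm G *ᵥ bv s t) = bv s t := by
  rw [Matrix.mulVec_mulVec, L_mul_Hm G hG, Matrix.sub_mulVec, Matrix.one_mulVec,
    Matrix.smul_mulVec, J_mulVec, sum_bv]
  ext w
  simp

lemma effRes_eq (s t : V) (hst : s ≠ t) :
    effRes G s t = bv s t ⬝ᵥ (Hm G *ᵥ bv s t) := by
  set L := G.lapMatrix ℝ with hL
  set b := bv s t with hb
  set y := Hm G *ᵥ bv s t with hy
  have hLy : L *ᵥ y = b := L_mulVec_Hm_bv G hG s t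
  set r := b ⬝ᵥ y with hr
  have hryLy : r = y ⬝ᵥ (L *ᵥ y) := by
    rw [hr, ← hLy]
    exact dotProduct_comm _ _
  have hrnn : (0:ℝ) ≤ r := by rw [hryLy]; exact energy_nonneg G y
  have hr0 : 0 < r := by
    rcases eq_or_lt_of_le hrnn with h | h
    · exfalso
      have hadj : ∀ i j : V, G.Adj i j → y i = y j := by
        apply (SimpleGraph.lapMatrix_toLinearMap₂'_apply'_eq_zero_iff_forall_adj ℝ G y).mp
        rw [← dot_energy, ← hryLy]
        exact h.symm
      have hzero : L *ᵥ y = 0 := by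
        exact (G.lapMatrix_mulVec_eq_zero_iff_forall_adj).mpr hadj
      have : b s = 0 := by rw [← hLy, hzero]; rfl
      rw [hb, bv] at this
      simp [hst] at this
    · exact h
  -- lower bound
  have hlb : ∀ φ : V → ℝ, φ s = 1 → φ t = 0 → r⁻¹ ≤ φ ⬝ᵥ (L *ᵥ φ) := by
    intro φ hφs hφt
    have hyLφ : y ⬝ᵥ (L *ᵥ φ) = 1 := by
      rw [dot_symm L (G.isSymm_lapMatrix ℝ).eq, hLy, hb, bv_dot, hφs, hφt, sub_zero]
    have hquad : ∀ x : ℝ, 0 ≤ r * (x * x) + 2 * x + φ ⬝ᵥ (L *ᵥ φ) := by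
      intro x
      have hE := energy_nonneg G (x • y + φ)
      rw [Matrix.mulVec_add, Matrix.mulVec_smul, dotProduct_add, add_dotProduct,
        add_dotProduct, smul_dotProduct, smul_dotProduct,
        dotProduct_smul, dotProduct_smul] at hE
      have hφLy : φ ⬝ᵥ (L *ᵥ y) = 1 := by
        rw [hLy, hb, dot_bv, hφs, hφt, sub_zero]
      rw [hφLy, hyLφ] at hE
      rw [← hryLy] at hE
      convert hE using 1
      simp only [smul_eq_mul]
      ring
    have hd := discrim_le_zero hquad
    rw [discrim] at hd
    have h1 : (1:ℝ) ≤ r * (φ ⬝ᵥ (L *ᵥ φ)) := by nlinarith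
    rw [inv_le_iff_one_le_mul₀ hr0]
    linarith [h1]
  -- the minimizing potential
  set φ₀ : V → ℝ := fun w => r⁻¹ * (y w - y t) with hφ₀
  have hφ₀s : φ₀ s = 1 := by
    have : y s - y t = r := by rw [hr, hb, bv_dot]
    rw [hφ₀]; simp only []; rw [this, inv_mul_cancel₀ hr0.ne']
  have hφ₀t : φ₀ t = 0 := by simp [hφ₀]
  have hLφ₀ : L *ᵥ φ₀ = r⁻¹ • b := by
    have : φ₀ = r⁻¹ • (y - (y t) • (fun _ => (1:ℝ))) := by
      ext w; simp [hφ₀, mul_sub]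
    rw [this, Matrix.mulVec_smul, Matrix.mulVec_sub, Matrix.mulVec_smul, hLy,
      hL, G.lapMatrix_mulVec_const_eq_zero, smul_zero, sub_zero]
  have hE₀ : φ₀ ⬝ᵥ (L *ᵥ φ₀) = r⁻¹ := by
    rw [hLφ₀, dotProduct_smul, smul_eq_mul, ← dotProduct_comm, hb, bv_dot,
      hφ₀s, hφ₀t, sub_zero, mul_one]
  -- compute the infimum
  have hinf : sInf {E : ℝ | ∃ φ : V → ℝ, φ s = 1 ∧ φ t = 0 ∧ E = φ ⬝ᵥ (G.lapMatrix ℝ *ᵥ φ)}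
      = r⁻¹ := by
    apply le_antisymm
    · exact csInf_le ⟨r⁻¹, fun E ⟨φ, h1, h2, h3⟩ => h3 ▸ hlb φ h1 h2⟩
        ⟨φ₀, hφ₀s, hφ₀t, hE₀.symm⟩
    · exact le_csInf ⟨r⁻¹, φ₀, hφ₀s, hφ₀t, hE₀.symm⟩ fun E ⟨φ, h1, h2, h3⟩ => h3 ▸ hlb φ h1 h2
  rw [effRes, hinf, inv_inv]


omit hG
lemma mulVec_bv (A : Matrix V V ℝ) (s t : V) (i : V) :
    (A *ᵥ bv s t) i = A i s - A i t := by
  simp [bv, Matrix.mulVec, dotProduct, mul_sub, Finset.sum_sub_distrib, mul_ite, mul_one,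
    mul_zero, Finset.sum_ite_eq']
include hG

lemma effRes_entry {u v : V} (h : G.Adj u v) :
    effRes G u v = Hm G u u + Hm G v v - Hm G u v - Hm G v u := by
  rw [effRes_eq G hG u v h.ne, bv_dot, mulVec_bv, mulVec_bv]
  ring

lemma trace_LH : Matrix.trace (G.lapMatrix ℝ * Hm G) = (Fintype.card V : ℝ) - 1 := by
  rw [L_mul_Hm G hG, Matrix.trace_sub, Matrix.trace_one, Matrix.trace_smul]
  have hJ : Matrix.trace (Jm V) = (Fintype.card V : ℝ) := by
    simp [Matrix.trace, Jm, Matrix.diag, Finset.card_univ]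
  rw [hJ, smul_eq_mul, inv_mul_cancel₀ (ncard_ne G hG)]

lemma trace_LH_expand : Matrix.trace (G.lapMatrix ℝ * Hm G)
    = ∑ u, ((G.degree u : ℝ) * Hm G u u - ∑ v, (if G.Adj u v then Hm G u v else 0)) := by
  have hHs : ∀ a c : V, Hm G c a = Hm G a c := fun a c =>
    (congrFun (congrFun (isSymm_Hm G hG) c) a).symm ▸ rfl
  rw [Matrix.trace]
  apply Finset.sum_congr rfl
  intro u _
  rw [Matrix.diag_apply, Matrix.mul_apply]
  have hL : ∀ w, G.lapMatrix ℝ u w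
      = (if u = w then (G.degree u : ℝ) else 0) - (if G.Adj u w then 1 else 0) := by
    intro w
    simp [SimpleGraph.lapMatrix, SimpleGraph.degMatrix, Matrix.diagonal_apply]
  simp_rw [hL, sub_mul, ite_mul, one_mul, zero_mul, Finset.sum_sub_distrib]
  congr 1
  · rw [Finset.sum_ite_eq (Finset.univ) u (fun w => (G.degree u : ℝ) * Hm G w u)]
    simp
  · apply Finset.sum_congr rfl
    intro w _
    have := congrFun (congrFun (isSymm_Hm G hG) u) w
    simp only [Matrix.transpose_apply] at this
    rw [this]

lemma sum_eq_twice_trace :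
    ∑ u, ∑ v, (if G.Adj u v then effRes G u v else 0)
      = 2 * Matrix.trace (G.lapMatrix ℝ * Hm G) := by
  have hHs : ∀ a c : V, Hm G a c = Hm G c a := by
    intro a c
    exact congrFun (congrFun (isSymm_Hm G hG) c) a
  have h1 : ∀ u v : V, (if G.Adj u v then effRes G u v else 0)
      = (if G.Adj u v then Hm G u u else 0) + (if G.Adj u v then Hm G v v else 0)
        - 2 * (if G.Adj u v then Hm G u v else 0) := by
    intro u v
    by_cases h : G.Adj u v
    · simp only [h, if_true]
      rw [effRes_entry G hG h, ← hHs u v]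
      ring
    · simp [h]
  simp_rw [h1]
  rw [Finset.sum_congr rfl (fun u _ => Finset.sum_sub_distrib _ _),
      Finset.sum_congr rfl (fun u _ => by rfl), Finset.sum_sub_distrib]
  rw [Finset.sum_congr rfl (fun u _ => Finset.sum_add_distrib), Finset.sum_add_distrib]
  have hdeg : ∀ u : V, ∑ v, (if G.Adj u v then Hm G u u else 0)
      = (G.degree u : ℝ) * Hm G u u := by
    intro u
    rw [G.degree_eq_sum_if_adj u, Finset.sum_mul]
    apply Finset.sum_congr rfl
    intro v _
    by_cases h : G.Adj u v <;> simp [h]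
  have hswap : ∑ u, ∑ v, (if G.Adj u v then Hm G v v else 0)
      = ∑ u, ∑ v, (if G.Adj u v then Hm G u u else 0) := by
    rw [Finset.sum_comm]
    apply Finset.sum_congr rfl; intro u _
    apply Finset.sum_congr rfl; intro v _
    exact if_congr (G.adj_comm v u) rfl rfl
  rw [hswap]
  simp_rw [hdeg]
  rw [trace_LH_expand G hG]
  have hexp : ∀ i : V, 2 * ((G.degree i : ℝ) * Hm G i i - ∑ v, (if G.Adj i v then Hm G i v else 0))
      = 2 * ((G.degree i : ℝ) * Hm G i i) - ∑ v, 2 * (if G.Adj i v then Hm G i v else 0) := by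
    intro i
    rw [mul_sub, Finset.mul_sum]
  rw [Finset.mul_sum]
  simp_rw [hexp]
  rw [Finset.sum_sub_distrib]
  congr 1
  simp_rw [two_mul]
  rw [Finset.sum_add_distrib]

end FosterAux


/-- Foster's theorem: in a connected graph on `n` vertices, the sum of the effective
resistances over all edges equals `n - 1`. (Each unordered edge appears twice in the
double sum, whence the factor `1/2`.) -/
theorem foster {V : Type*} [Fintype V] [DecidableEq V] (G : SimpleGraph V)
    [DecidableRel G.Adj] (hG : G.Connected) :
    (1 / 2 : ℝ) * ∑ u, ∑ v, (if G.Adj u v then effRes G u v else 0) =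
      (Fintype.card V : ℝ) - 1 := by
  rw [FosterAux.sum_eq_twice_trace G hG, FosterAux.trace_LH G hG]
  ring
end

section
/- For a vertex u of a graph G, the vertices (u,0) and (u,1) are connected in the bipartite double cover K^G if and only if the connected component of G containing u contains a cycle of odd length. -/
/-!
A walk in the double cover flips the `Bool` layer at every step, so its endpoints lie in
different layers exactly when its length is odd; projecting to `G` preserves length, and
conversely every walk of `G` lifts step by step. Hence `(a, i)` and `(b, j)` are connected
iff some walk from `a` to `b` has length of parity `i ≠ j`. An odd closed walk at `v`,
conjugated by a path from `u` to `v`, gives an odd closed walk at `u`.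
-/

/-- The bipartite double cover of a graph `G`: vertices are `V × Bool`, and `(x,i)` is
adjacent to `(y,j)` iff `{x,y} ∈ E(G)` and `i ≠ j`. -/
def doubleCover {V : Type*} (G : SimpleGraph V) : SimpleGraph (V × Bool) where
  Adj a b := G.Adj a.1 b.1 ∧ a.2 ≠ b.2
  symm := ⟨fun _ _ h => ⟨h.1.symm, h.2.symm⟩⟩
  loopless := ⟨fun _ h => h.2 rfl⟩

section

variable {V : Type*} {G : SimpleGraph V}

namespace doubleCover

variable (G) in
def fst : doubleCover G →g G := ⟨Prod.fst, fun h => h.1⟩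

theorem odd_length_iff_ne {x y : V × Bool} (W : (doubleCover G).Walk x y) :
    Odd W.length ↔ x.2 ≠ y.2 := by
  induction W with
  | nil => simp
  | @cons a c b hac _ ih =>
    have hflip : a.2 ≠ c.2 := hac.2
    rw [SimpleGraph.Walk.length_cons, Nat.odd_add_one, ih]
    revert hflip
    cases a.2 <;> cases c.2 <;> cases b.2 <;> simp

theorem reachable_of_walk {a b : V} (p : G.Walk a b) {i j : Bool}
    (hp : Odd p.length ↔ i ≠ j) : (doubleCover G).Reachable (a, i) (b, j) := by
  induction p generalizing i with
  | nil => simp_all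
  | @cons a c b hac q ih =>
    have hstep : (doubleCover G).Adj (a, i) (c, !i) := ⟨hac, by cases i <;> simp⟩
    refine hstep.reachable.trans (ih ?_)
    rw [SimpleGraph.Walk.length_cons, Nat.odd_add_one] at hp
    cases i <;> cases j <;> simp_all

theorem reachable_iff {a b : V} {i j : Bool} :
    (doubleCover G).Reachable (a, i) (b, j) ↔ ∃ p : G.Walk a b, (Odd p.length ↔ i ≠ j) :=
  ⟨fun ⟨W⟩ => ⟨W.map (fst G), (W.length_map (fst G)).symm ▸ odd_length_iff_ne W⟩,
    fun ⟨p, hp⟩ => reachable_of_walk p hp⟩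

end doubleCover

theorem SimpleGraph.Reachable.exists_odd_closed_walk {u v : V} (huv : G.Reachable u v)
    {p : G.Walk v v} (hp : Odd p.length) : ∃ q : G.Walk u u, Odd q.length := by
  obtain ⟨r⟩ := huv
  refine ⟨r.append (p.append r.reverse), ?_⟩
  obtain ⟨k, hk⟩ := hp
  exact ⟨r.length + k, by simp only [Walk.length_append, Walk.length_reverse]; omega⟩

end

/-- `(u, 0)` and `(u, 1)` are connected in the bipartite double cover of `G` iff the
connected component of `G` containing `u` contains a closed walk of odd length. -/
theorem doubleCover_reachable_iff_odd_closed_walk {V : Type*} (G : SimpleGraph V) (u : V) :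
    (doubleCover G).Reachable (u, false) (u, true) ↔
      ∃ v : V, G.Reachable u v ∧ ∃ p : G.Walk v v, Odd p.length := by
  rw [doubleCover.reachable_iff]
  constructor
  · rintro ⟨p, hp⟩
    exact ⟨u, .refl u, p, hp.2 Bool.false_ne_true⟩
  · rintro ⟨v, huv, p, hp⟩
    obtain ⟨q, hq⟩ := huv.exists_odd_closed_walk hp
    exact ⟨q, iff_of_true hq Bool.false_ne_true⟩
end

section
/- If a finite simple graph has no even-length cycle, then every edge lies on at most one cycle. -/
namespace SimpleGraph.Walk
variable {V : Type*} {G : SimpleGraph V}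

lemma myLoopNil {u : V} : ∀ {p : G.Walk u u}, p.IsPath → p = nil
  | nil, _ => rfl
  | cons h q, hp => by
    exfalso
    have := hp.support_nodup
    rw [support_cons, List.nodup_cons] at this
    exact this.1 q.end_mem_support

lemma myEndMemTail {u v : V} {p : G.Walk u v} (hp : ¬ p.Nil) : v ∈ p.support.tail := by
  cases p with
  | nil => exact absurd Walk.Nil.nil hp
  | cons h q => simp only [support_cons, List.tail_cons]; exact q.end_mem_support

lemma myConsOfEdge {u v w : V} : ∀ {p : G.Walk u w}, p.IsPath → s(u, v) ∈ p.edges →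
    ∃ (h' : G.Adj u v) (q : G.Walk v w), p = cons h' q
  | nil, _, he => by simp at he
  | cons h q, hp, he => by
    rw [edges_cons, List.mem_cons] at he
    rcases he with he | he
    · rw [Sym2.eq_iff] at he
      rcases he with ⟨-, rfl⟩ | ⟨he1, rfl⟩
      · exact ⟨h, q, rfl⟩
      · exact absurd he1 h.ne
    · exfalso
      have := hp.support_nodup
      rw [support_cons, List.nodup_cons] at this
      exact this.1 (q.fst_mem_support_of_mem_edges he)

lemma myEdgesEq {u w : V} {p : G.Walk u w} (hp : p.IsPath) (he : s(u, w) ∈ p.edges) :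
    p.edges = [s(u, w)] := by
  obtain ⟨h', q, rfl⟩ := myConsOfEdge hp he
  have : q = nil := myLoopNil hp.of_cons
  subst this; rfl

lemma mySplitAtEdge {s t : V} {f : Sym2 V} : ∀ {p : G.Walk s t}, f ∈ p.edges →
    ∃ (x y : V) (h : G.Adj x y) (w₁ : G.Walk s x) (w₂ : G.Walk y t),
      p = w₁.append (cons h w₂) ∧ f = s(x, y)
  | nil, he => by simp at he
  | cons h q, he => by
    rw [edges_cons, List.mem_cons] at he
    rcases he with rfl | he
    · exact ⟨_, _, h, nil, q, rfl, rfl⟩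
    · obtain ⟨x, y, h', w₁, w₂, rfl, rfl⟩ := mySplitAtEdge he
      exact ⟨x, y, h', cons h w₁, w₂, by rw [cons_append], rfl⟩

lemma myLastExit {s t : V} (L : List V) : ∀ (p : G.Walk s t),
    (∀ z ∈ p.support, z ∉ L) ∨
    ∃ (x : V) (_ : x ∈ L) (w₁ : G.Walk s x) (w₂ : G.Walk x t),
      p = w₁.append w₂ ∧ ∀ z ∈ w₂.support.tail, z ∉ L
  | nil => by
    by_cases hs : s ∈ L
    · exact Or.inr ⟨s, hs, nil, nil, rfl, by simp⟩
    · exact Or.inl (by simpa using hs)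
  | cons h q => by
    rcases myLastExit L q with hq | ⟨x, hx, w₁, w₂, rfl, hw₂⟩
    · by_cases hs : s ∈ L
      · refine Or.inr ⟨s, hs, nil, cons h q, rfl, ?_⟩
        simpa using hq
      · refine Or.inl ?_
        intro z hz
        rw [support_cons, List.mem_cons] at hz
        rcases hz with rfl | hz
        · exact hs
        · exact hq z hz
    · exact Or.inr ⟨x, hx, cons h w₁, w₂, by rw [cons_append], hw₂⟩

lemma myAppendIsCycle {a b : V} (hab : a ≠ b) {p : G.Walk a b} {q : G.Walk b a}
    (hp : p.IsPath) (hq : q.IsPath)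
    (hsupp : ∀ z, z ∈ p.support → z ∈ q.support → z = a ∨ z = b)
    (hde : ∀ g ∈ p.edges, g ∉ q.edges) : (p.append q).IsCycle := by
  rw [isCycle_def]
  refine ⟨?_, ?_, ?_⟩
  · rw [isTrail_def, edges_append, List.nodup_append]
    exact ⟨hp.isTrail.edges_nodup, hq.isTrail.edges_nodup, fun g hg g' hg' hgg => hde g hg (hgg ▸ hg')⟩
  · intro hn
    apply hab
    have := congrArg length hn
    rw [length_append, length_nil] at this
    have hp0 : p.length = 0 := by omega
    exact (nil_iff_length_eq.mpr hp0).eq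
  · rw [tail_support_append, List.nodup_append]
    have hpn := hp.support_nodup
    have hqn := hq.support_nodup
    rw [support_eq_cons, List.nodup_cons] at hpn hqn
    refine ⟨hpn.2, hqn.2, ?_⟩
    intro z hz1 z' hz2 hzz; subst hzz
    have hz1' : z ∈ p.support := by rw [support_eq_cons]; exact List.mem_cons_of_mem _ hz1
    have hz2' : z ∈ q.support := by rw [support_eq_cons]; exact List.mem_cons_of_mem _ hz2
    rcases hsupp z hz1' hz2' with rfl | rfl
    · exact hpn.1 hz1
    · exact hqn.1 hz2

lemma myCore {u v : V}
    (hG : ∀ (a : V) (c : G.Walk a a), c.IsCycle → ¬ Even c.length)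
    (h' : G.Adj u v) {P Q : G.Walk v u} (hP : P.IsPath) (hQ : Q.IsPath)
    (heP : s(u, v) ∉ P.edges) (heQ : s(u, v) ∉ Q.edges)
    {f : Sym2 V} (hfP : f ∈ P.edges) (hfQ : f ∉ Q.edges) : False := by
  classical
  set C1 : G.Walk u u := cons h' Q with hC1def
  have hC1 : C1.IsCycle := (cons_isCycle_iff Q h').mpr ⟨hQ, heQ⟩
  set L : List V := C1.support with hLdef
  have hfC1 : f ∉ C1.edges := by
    rw [hC1def, edges_cons, List.mem_cons]
    rintro (rfl | hf)
    · exact heP hfP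
    · exact hfQ hf
  obtain ⟨c, c₂, hd, P₁, P₃, hPsplit, rfl⟩ := mySplitAtEdge hfP
  have hvL : v ∈ L := by
    rw [hLdef, hC1def, support_cons]; exact List.mem_cons_of_mem _ Q.start_mem_support
  rcases myLastExit L P₁ with hno | ⟨x', hx'L, T₁, T₂, hP₁, hT₂⟩
  · exact hno v P₁.start_mem_support hvL
  have huL : u ∈ L := by rw [hLdef]; exact C1.start_mem_support
  rcases myLastExit L P₃.reverse with hno | ⟨y', hy'L, W₁, W₂, hP₃r, hW₂⟩
  · exact hno u P₃.reverse.start_mem_support huL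
  set T₃ : G.Walk c₂ y' := W₂.reverse with hT₃def
  have hP₃ : P₃ = T₃.append W₁.reverse := by
    have := congrArg Walk.reverse hP₃r
    rwa [reverse_reverse, reverse_append] at this
  set R : G.Walk x' y' := T₂.append (cons hd T₃) with hRdef
  have hPdecomp : P₁.append (cons hd P₃) = T₁.append (R.append W₁.reverse) := by
    rw [hP₁, hP₃, hRdef]
    simp only [append_assoc, ← cons_append]
  have hR : R.IsPath := by
    have h1 : (T₁.append (R.append W₁.reverse)).IsPath := by
      rw [← hPdecomp, ← hPsplit]; exact hP
    exact h1.of_append_right.of_append_left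
  have hfR : s(c, c₂) ∈ R.edges := by
    rw [hRdef, edges_append, List.mem_append, edges_cons]
    exact Or.inr List.mem_cons_self
  have hcase1 : ∀ z ∈ T₂.support, z ∈ L → z = x' := by
    intro z hz hzL
    rw [support_eq_cons] at hz
    rcases List.mem_cons.mp hz with rfl | hz
    · rfl
    · exact absurd hzL (hT₂ z hz)
  have hcase2 : ∀ z ∈ T₃.support, z ∈ L → z = y' := by
    intro z hz hzL
    rw [hT₃def, support_reverse, List.mem_reverse, support_eq_cons] at hz
    rcases List.mem_cons.mp hz with rfl | hz
    · rfl
    · exact absurd hzL (hW₂ z hz)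
  have hRL : ∀ z ∈ R.support, z ∈ L → z = x' ∨ z = y' := by
    intro z hz hzL
    rw [hRdef, mem_support_append_iff] at hz
    rcases hz with hz | hz
    · exact Or.inl (hcase1 z hz hzL)
    · rw [support_cons] at hz
      rcases List.mem_cons.mp hz with rfl | hz
      · exact Or.inl (hcase1 z T₂.end_mem_support hzL)
      · exact Or.inr (hcase2 z hz hzL)
  have hxyne : x' ≠ y' := by
    intro h
    subst h
    have hnil := myLoopNil hR
    rw [hnil] at hfR
    simp at hfR
  have hx'C1 : x' ∈ C1.support := hLdef ▸ hx'L
  set C2 := C1.rotate x' hx'C1 with hC2def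
  have hC2 : C2.IsCycle := hC1.rotate hx'C1
  have hrotE : ∀ g, g ∈ C2.edges ↔ g ∈ C1.edges := fun g => (rotate_edges C1 x' hx'C1).mem_iff
  have hrotS : ∀ z, z ∈ C2.support.tail ↔ z ∈ C1.support.tail :=
    fun z => (support_rotate C1 x' hx'C1).mem_iff
  have htailC1 : C1.support.tail = Q.support := by rw [hC1def, support_cons, List.tail_cons]
  have hy'Q : y' ∈ Q.support := by
    have : y' ∈ u :: Q.support := by rw [hLdef, hC1def, support_cons] at hy'L; exact hy'L
    rcases List.mem_cons.mp this with rfl | hy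
    · exact Q.end_mem_support
    · exact hy
  have hy'C2 : y' ∈ C2.support := by
    rw [support_eq_cons]
    exact List.mem_cons_of_mem _ ((hrotS y').mpr (htailC1 ▸ hy'Q))
  obtain ⟨w₀, h₀, C3, hC2eq⟩ := not_nil_iff.mp hC2.not_nil
  have hC3 : C3.IsPath ∧ s(x', w₀) ∉ C3.edges := (cons_isCycle_iff C3 h₀).mp (hC2eq ▸ hC2)
  have hy'C3 : y' ∈ C3.support := by
    rw [hC2eq, support_cons] at hy'C2
    rcases List.mem_cons.mp hy'C2 with h | h
    · exact absurd h (Ne.symm hxyne)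
    · exact h
  set A1 : G.Walk x' y' := cons h₀ (C3.takeUntil y' hy'C3) with hA1def
  set A2 : G.Walk y' x' := C3.dropUntil y' hy'C3 with hA2def
  have hC2eq2 : C2 = A1.append A2 := by
    rw [hC2eq, hA1def, hA2def, cons_append, take_spec]
  have hA2path : A2.IsPath := hC3.1.dropUntil hy'C3
  have hA1path : A1.IsPath := by
    rw [hA1def, cons_isPath_iff]
    refine ⟨hC3.1.takeUntil hy'C3, ?_⟩
    intro hx'take
    have hnn : ¬ A2.Nil := not_nil_of_ne (Ne.symm hxyne)
    have hx'tail : x' ∈ A2.support.tail := myEndMemTail hnn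
    have hnd := hC3.1.support_nodup
    rw [← take_spec C3 hy'C3, support_append, List.nodup_append] at hnd
    exact hnd.2.2 x' hx'take x' hx'tail rfl
  have hC2suppL : ∀ z ∈ C2.support, z ∈ L := by
    intro z hz
    rw [support_eq_cons] at hz
    rcases List.mem_cons.mp hz with rfl | hz
    · exact hx'L
    · rw [hLdef, support_eq_cons]
      exact List.mem_cons_of_mem _ ((hrotS z).mp hz)
  have hA1suppL : ∀ z ∈ A1.support, z ∈ L := by
    intro z hz
    exact hC2suppL z (by rw [hC2eq2, mem_support_append_iff]; exact Or.inl hz)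
  have hA2suppL : ∀ z ∈ A2.support, z ∈ L := by
    intro z hz
    exact hC2suppL z (by rw [hC2eq2, mem_support_append_iff]; exact Or.inr hz)
  have key : ∀ g : Sym2 V, g ∈ C2.edges → g ∈ R.edges → False := by
    intro g
    induction g using Sym2.ind with
    | _ z₁ z₂ =>
      intro hg1 hg2
      have hadj := adj_of_mem_edges _ hg1
      have h1 := hRL z₁ (R.fst_mem_support_of_mem_edges hg2)
        (hC2suppL z₁ (C2.fst_mem_support_of_mem_edges hg1))
      have h2 := hRL z₂ (R.snd_mem_support_of_mem_edges hg2)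
        (hC2suppL z₂ (C2.snd_mem_support_of_mem_edges hg1))
      have hgeq : s(z₁, z₂) = s(x', y') := by
        rcases h1 with rfl | rfl <;> rcases h2 with rfl | rfl
        · exact absurd rfl hadj.ne
        · rfl
        · exact Sym2.eq_swap
        · exact absurd rfl hadj.ne
      rw [hgeq] at hg1 hg2
      have hRedges := myEdgesEq hR hg2
      have hfeq : s(c, c₂) = s(x', y') := by
        rw [hRedges] at hfR
        simpa using hfR
      exact hfC1 ((hrotE _).mp (hfeq ▸ hg1))
  have cyc2 : (A1.append R.reverse).IsCycle := by
    refine myAppendIsCycle hxyne hA1path hR.reverse ?_ ?_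
    · intro z hz1 hz2
      rw [support_reverse, List.mem_reverse] at hz2
      exact hRL z hz2 (hA1suppL z hz1)
    · intro g hg1 hg2
      rw [edges_reverse, List.mem_reverse] at hg2
      exact key g (by rw [hC2eq2, edges_append, List.mem_append]; exact Or.inl hg1) hg2
  have cyc3 : (A2.reverse.append R.reverse).IsCycle := by
    refine myAppendIsCycle (Ne.symm hxyne).symm hA2path.reverse hR.reverse ?_ ?_
    · intro z hz1 hz2
      rw [support_reverse, List.mem_reverse] at hz1 hz2
      exact hRL z hz2 (hA2suppL z hz1)
    · intro g hg1 hg2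
      rw [edges_reverse, List.mem_reverse] at hg1 hg2
      exact key g (by rw [hC2eq2, edges_append, List.mem_append]; exact Or.inr hg1) hg2
  have podd1 : ¬ Even C2.length := hG x' C2 hC2
  have podd2 : ¬ Even (A1.append R.reverse).length := hG x' _ cyc2
  have podd3 : ¬ Even (A2.reverse.append R.reverse).length := hG x' _ cyc3
  rw [hC2eq2, length_append] at podd1
  rw [length_append, length_reverse] at podd2
  rw [length_append, length_reverse, length_reverse] at podd3
  rw [Nat.not_even_iff] at podd1 podd2 podd3
  omega

/-- Decompose a cycle through an edge incident to its basepoint. -/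
lemma myCycleDecomp {u v : V} {c : G.Walk u u} (hc : c.IsCycle) (he : s(u, v) ∈ c.edges) :
    ∃ (h' : G.Adj u v) (P : G.Walk v u), P.IsPath ∧ s(u, v) ∉ P.edges ∧
      ∀ x, x ∈ c.edges ↔ x = s(u, v) ∨ x ∈ P.edges := by
  cases c with
  | nil => simp at he
  | cons h1 q =>
    rw [cons_isCycle_iff] at hc
    obtain ⟨hq, huw⟩ := hc
    rw [edges_cons, List.mem_cons] at he
    rcases he with he | he
    · rw [Sym2.eq_iff] at he
      rcases he with ⟨-, rfl⟩ | ⟨rfl, -⟩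
      · exact ⟨h1, q, hq, huw, fun x => by rw [edges_cons, List.mem_cons]⟩
      · exact absurd rfl h1.ne
    · -- the edge is inside q, incident to u = q's endpoint
      have hqr : q.reverse.IsPath := hq.reverse
      have her : s(u, v) ∈ q.reverse.edges := by
        rw [edges_reverse, List.mem_reverse]; exact he
      obtain ⟨h', r, hqe⟩ := myConsOfEdge hqr her
      -- q = (cons h' r).reverse
      have hq2 : q = r.reverse.append (cons h'.symm nil) := by
        have := congrArg Walk.reverse hqe
        rwa [reverse_reverse, reverse_cons] at this
      have hrpath : r.IsPath := by
        have := hqe ▸ hqr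
        exact this.of_cons
      have hunotr : u ∉ r.support := by
        have := (hqe ▸ hqr).support_nodup
        rw [support_cons, List.nodup_cons] at this
        exact this.1
      -- P : Walk v u
      refine ⟨h', (cons h1 r.reverse).reverse, ?_, ?_, ?_⟩
      · rw [isPath_reverse_iff, cons_isPath_iff]
        refine ⟨hrpath.reverse, ?_⟩
        rwa [support_reverse, List.mem_reverse]
      · rw [edges_reverse, List.mem_reverse, edges_cons, List.mem_cons]
        rintro (hx | hx)
        · rw [Sym2.eq_iff] at hx
          rcases hx with ⟨-, rfl⟩ | ⟨rfl, -⟩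
          · exact huw he
          · exact absurd rfl h1.ne
        · have := (hqe ▸ hqr).isTrail.edges_nodup
          rw [edges_cons, List.nodup_cons] at this
          rw [edges_reverse, List.mem_reverse] at hx
          exact this.1 hx
      · intro x
        have hqedges : ∀ y, y ∈ q.edges ↔ y = s(u, v) ∨ y ∈ r.edges := by
          intro y
          have : y ∈ q.edges ↔ y ∈ q.reverse.edges := by
            rw [edges_reverse, List.mem_reverse]
          rw [this, hqe, edges_cons, List.mem_cons]
        rw [edges_cons, List.mem_cons, hqedges, edges_reverse, List.mem_reverse,
          edges_cons, List.mem_cons, edges_reverse, List.mem_reverse]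
        tauto

end SimpleGraph.Walk

/-- In a finite simple graph with no even-length cycle, every edge lies on at most one
cycle: any two cycles through a common edge have the same edge set. -/
theorem edge_in_at_most_one_cycle_of_no_even_cycle {V : Type*} (G : SimpleGraph V)
    (h : ∀ (a : V) (p : G.Walk a a), p.IsCycle → ¬ Even p.length)
    (e : Sym2 V) (a b : V) (p : G.Walk a a) (q : G.Walk b b)
    (hp : p.IsCycle) (hq : q.IsCycle) (hep : e ∈ p.edges) (heq : e ∈ q.edges) :
    ∀ e' : Sym2 V, e' ∈ p.edges ↔ e' ∈ q.edges := by
  classical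
  revert hep heq
  induction e using Sym2.ind with
  | _ u v =>
    intro hep heq
    have huP : u ∈ p.support := p.fst_mem_support_of_mem_edges hep
    have huQ : u ∈ q.support := q.fst_mem_support_of_mem_edges heq
    have hp' : (p.rotate u huP).IsCycle := hp.rotate huP
    have hq' : (q.rotate u huQ).IsCycle := hq.rotate huQ
    have hpe : ∀ g, g ∈ (p.rotate u huP).edges ↔ g ∈ p.edges :=
      fun g => (SimpleGraph.Walk.rotate_edges p u huP).mem_iff
    have hqe : ∀ g, g ∈ (q.rotate u huQ).edges ↔ g ∈ q.edges :=
      fun g => (SimpleGraph.Walk.rotate_edges q u huQ).mem_iff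
    obtain ⟨h1, P, hP, hePnot, hPchar⟩ :=
      SimpleGraph.Walk.myCycleDecomp hp' ((hpe _).mpr hep)
    obtain ⟨h2, Q, hQ, heQnot, hQchar⟩ :=
      SimpleGraph.Walk.myCycleDecomp hq' ((hqe _).mpr heq)
    have main : ∀ g, g ∈ P.edges ↔ g ∈ Q.edges := by
      intro g
      constructor
      · intro hg
        by_contra hng
        exact SimpleGraph.Walk.myCore h h1 hP hQ hePnot heQnot hg hng
      · intro hg
        by_contra hng
        exact SimpleGraph.Walk.myCore h h1 hQ hP heQnot hePnot hg hng
    intro e'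
    rw [← hpe e', ← hqe e', hPchar, hQchar, main e']
end

section
/- If H is a subgraph of G on the same vertex set and s, t are connected in H, then R_{s,t}(G) ≤ R_{s,t}(H) (effective resistance is monotone non-increasing under edge addition, Rayleigh monotonicity). -/
open Matrix

/-- The Dirichlet energy as a sum over adjacent pairs. -/
lemma energy_eq_sum {V : Type*} [Fintype V] [DecidableEq V] (G : SimpleGraph V)
    [DecidableRel G.Adj] (φ : V → ℝ) :
    φ ⬝ᵥ (G.lapMatrix ℝ *ᵥ φ) =
      (∑ i : V, ∑ j : V, if G.Adj i j then (φ i - φ j)^2 else 0) / 2 := by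
  rw [← Matrix.toLinearMap₂'_apply', SimpleGraph.lapMatrix_toLinearMap₂']

lemma energy_nonneg {V : Type*} [Fintype V] [DecidableEq V] (G : SimpleGraph V)
    [DecidableRel G.Adj] (φ : V → ℝ) : 0 ≤ φ ⬝ᵥ (G.lapMatrix ℝ *ᵥ φ) := by
  rw [energy_eq_sum]; positivity

/-- Each single adjacent-pair square is at most the total energy. -/
lemma sq_le_energy {V : Type*} [Fintype V] [DecidableEq V] (G : SimpleGraph V)
    [DecidableRel G.Adj] (φ : V → ℝ) {u v : V} (h : G.Adj u v) :
    (φ u - φ v)^2 ≤ φ ⬝ᵥ (G.lapMatrix ℝ *ᵥ φ) := by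
  rw [energy_eq_sum]
  have h1 : ∀ i : V, 0 ≤ ∑ j : V, if G.Adj i j then (φ i - φ j)^2 else 0 := by
    intro i; positivity
  have h2 : (φ u - φ v)^2 ≤ ∑ j : V, if G.Adj u j then (φ u - φ j)^2 else 0 := by
    have := Finset.single_le_sum (f := fun j => if G.Adj u j then (φ u - φ j)^2 else 0)
      (fun j _ => by positivity) (Finset.mem_univ v)
    simpa [h] using this
  have h3 : (φ v - φ u)^2 ≤ ∑ j : V, if G.Adj v j then (φ v - φ j)^2 else 0 := by
    have := Finset.single_le_sum (f := fun j => if G.Adj v j then (φ v - φ j)^2 else 0)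
      (fun j _ => by positivity) (Finset.mem_univ u)
    simpa [h.symm] using this
  have h4 : (φ u - φ v)^2 + (φ u - φ v)^2 ≤ ∑ i : V, ∑ j : V,
      if G.Adj i j then (φ i - φ j)^2 else 0 := by
    have hne : u ≠ v := h.ne
    calc (φ u - φ v)^2 + (φ u - φ v)^2
        = (φ u - φ v)^2 + (φ v - φ u)^2 := by ring
      _ ≤ (∑ j : V, if G.Adj u j then (φ u - φ j)^2 else 0) +
          (∑ j : V, if G.Adj v j then (φ v - φ j)^2 else 0) := add_le_add h2 h3
      _ ≤ ∑ i : V, ∑ j : V, if G.Adj i j then (φ i - φ j)^2 else 0 := by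
          have := Finset.add_sum_erase (Finset.univ.erase v)
            (fun i => ∑ j : V, if G.Adj i j then (φ i - φ j)^2 else 0)
            (Finset.mem_erase.2 ⟨hne, Finset.mem_univ u⟩)
          calc (∑ j : V, if G.Adj u j then (φ u - φ j)^2 else 0) +
                (∑ j : V, if G.Adj v j then (φ v - φ j)^2 else 0)
              ≤ ∑ i ∈ (Finset.univ.erase v).erase u ∪ {u, v}, ∑ j : V,
                  if G.Adj i j then (φ i - φ j)^2 else 0 := by
                rw [Finset.sum_union]
                · have : (0:ℝ) ≤ ∑ i ∈ (Finset.univ.erase v).erase u, ∑ j : V,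
                      if G.Adj i j then (φ i - φ j)^2 else 0 :=
                    Finset.sum_nonneg fun i _ => h1 i
                  rw [Finset.sum_pair hne]
                  linarith
                · simp [Finset.disjoint_insert_right, hne]
            _ = ∑ i : V, ∑ j : V, if G.Adj i j then (φ i - φ j)^2 else 0 := by
                congr 1
                ext i
                simp only [Finset.mem_union, Finset.mem_erase, Finset.mem_univ,
                  Finset.mem_insert, Finset.mem_singleton, and_true, iff_true]
                by_cases hi : i = u
                · exact Or.inr (Or.inl hi)
                · by_cases hj : i = v
                  · exact Or.inr (Or.inr hj)
                  · exact Or.inl ⟨hi, hj⟩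
  linarith

/-- Telescoping bound along a walk. -/
lemma walk_bound {V : Type*} (H : SimpleGraph V) (φ : V → ℝ) (c : ℝ) (hc : 0 ≤ c)
    (hadj : ∀ u v : V, H.Adj u v → |φ u - φ v| ≤ c) :
    ∀ {s t : V} (p : H.Walk s t), |φ s - φ t| ≤ p.length * c := by
  intro s t p
  induction p with
  | nil => simp
  | @cons u v w h q ih =>
    calc |φ u - φ w| = |(φ u - φ v) + (φ v - φ w)| := by ring_nf
      _ ≤ |φ u - φ v| + |φ v - φ w| := abs_add_le _ _
      _ ≤ c + q.length * c := add_le_add (hadj _ _ h) ih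
      _ = ((q.length : ℝ) + 1) * c := by ring
      _ = ((SimpleGraph.Walk.cons h q).length : ℝ) * c := by
        rw [SimpleGraph.Walk.length_cons]; push_cast; ring

/-- Rayleigh monotonicity: if `H` is a spanning subgraph of `G` and `s`, `t` are connected
in `H`, then `R_{s,t}(G) ≤ R_{s,t}(H)`. -/
theorem effRes_monotone {V : Type*} [Fintype V] [DecidableEq V]
    (G H : SimpleGraph V) [DecidableRel G.Adj] [DecidableRel H.Adj]
    (hHG : H ≤ G) (s t : V) (hst : H.Reachable s t) :
    effRes G s t ≤ effRes H s t := by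
  classical
  by_cases hstne : s = t
  · subst hstne
    have : {E : ℝ | ∃ φ : V → ℝ, φ s = 1 ∧ φ s = 0 ∧ E = φ ⬝ᵥ (G.lapMatrix ℝ *ᵥ φ)} = ∅ := by
      ext E; simp only [Set.mem_setOf_eq, Set.mem_empty_iff_false, iff_false]
      rintro ⟨φ, h1, h0, _⟩; rw [h1] at h0; norm_num at h0
    have hH : {E : ℝ | ∃ φ : V → ℝ, φ s = 1 ∧ φ s = 0 ∧ E = φ ⬝ᵥ (H.lapMatrix ℝ *ᵥ φ)} = ∅ := by
      ext E; simp only [Set.mem_setOf_eq, Set.mem_empty_iff_false, iff_false]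
      rintro ⟨φ, h1, h0, _⟩; rw [h1] at h0; norm_num at h0
    rw [effRes, effRes, this, hH]
  · set SG := {E : ℝ | ∃ φ : V → ℝ, φ s = 1 ∧ φ t = 0 ∧ E = φ ⬝ᵥ (G.lapMatrix ℝ *ᵥ φ)} with hSG
    set SH := {E : ℝ | ∃ φ : V → ℝ, φ s = 1 ∧ φ t = 0 ∧ E = φ ⬝ᵥ (H.lapMatrix ℝ *ᵥ φ)} with hSH
    obtain ⟨p⟩ := hst
    have hplen : 0 < p.length := by
      cases p with
      | nil => exact absurd rfl hstne
      | cons h q => simp [SimpleGraph.Walk.length_cons]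
    -- the indicator function witnesses nonemptiness
    have hwitG : SG.Nonempty := by
      refine ⟨_, fun v => if v = s then 1 else 0, by simp, by simp [Ne.symm hstne], rfl⟩
    have hwitH : SH.Nonempty := by
      refine ⟨_, fun v => if v = s then 1 else 0, by simp, by simp [Ne.symm hstne], rfl⟩
    have hbddH : BddBelow SH := by
      refine ⟨0, fun E hE => ?_⟩
      obtain ⟨φ, _, _, rfl⟩ := hE
      exact energy_nonneg H φ
    -- lower bound for SH
    have hlow : ∀ E ∈ SH, (1 : ℝ) / (p.length^2 : ℝ) ≤ E := by
      rintro E ⟨φ, h1, h0, rfl⟩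
      set En := φ ⬝ᵥ (H.lapMatrix ℝ *ᵥ φ) with hEn
      have hEnn : 0 ≤ En := energy_nonneg H φ
      have hadj : ∀ u v : V, H.Adj u v → |φ u - φ v| ≤ Real.sqrt En := by
        intro u v huv
        rw [← Real.sqrt_sq_eq_abs]
        exact Real.sqrt_le_sqrt (sq_le_energy H φ huv)
      have := walk_bound H φ (Real.sqrt En) (Real.sqrt_nonneg _) hadj p
      rw [h1, h0, sub_zero, abs_one] at this
      have hlp : (0:ℝ) < (p.length : ℝ) := by exact_mod_cast hplen
      have hs : 1 / (p.length : ℝ) ≤ Real.sqrt En := by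
        rw [div_le_iff₀ hlp]
        nlinarith [this]
      calc (1:ℝ) / (p.length^2 : ℝ) = (1 / (p.length : ℝ))^2 := by
            rw [div_pow, one_pow]
        _ ≤ Real.sqrt En ^ 2 := by
            apply sq_le_sq' <;> nlinarith [Real.sqrt_nonneg En, one_div_pos.2 hlp]
        _ = En := Real.sq_sqrt hEnn
    have hBpos : 0 < sInf SH := lt_of_lt_of_le (by positivity) (le_csInf hwitH hlow)
    have hBA : sInf SH ≤ sInf SG := by
      apply le_csInf hwitG
      rintro E ⟨φ, h1, h0, rfl⟩
      have hle : φ ⬝ᵥ (H.lapMatrix ℝ *ᵥ φ) ≤ φ ⬝ᵥ (G.lapMatrix ℝ *ᵥ φ) := by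
        rw [energy_eq_sum, energy_eq_sum]
        have hsum : (∑ i : V, ∑ j : V, if H.Adj i j then (φ i - φ j)^2 else 0) ≤
            ∑ i : V, ∑ j : V, if G.Adj i j then (φ i - φ j)^2 else 0 := by
          apply Finset.sum_le_sum; intro i _
          apply Finset.sum_le_sum; intro j _
          by_cases h : H.Adj i j
          · simp [h, hHG h]
          · simp only [h, if_false]; positivity
        linarith
      exact le_trans (csInf_le hbddH ⟨φ, h1, h0, rfl⟩) hle
    exact inv_anti₀ hBpos hBA
end

section
/- Let graphs G₁ and G₂ with distinguished vertices s,t be combined in parallel (identifying the two s vertices and the two t vertices). Then s and t are connected in the combined graph if and only if s and t are connected in G₁ or in G₂. -/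
/-- The disjoint union of two graphs, on the sum of their vertex types. -/
def disjUnion {V₁ V₂ : Type*} (G₁ : SimpleGraph V₁) (G₂ : SimpleGraph V₂) :
    SimpleGraph (V₁ ⊕ V₂) where
  Adj a b :=
    match a, b with
    | Sum.inl x, Sum.inl y => G₁.Adj x y
    | Sum.inr x, Sum.inr y => G₂.Adj x y
    | _, _ => False
  symm := by
    constructor
    rintro (x | x) (y | y) h <;> simp_all <;> exact h.symm
  loopless := by
    constructor
    rintro (x | x) h <;> simp_all

/-- The graph obtained from gluing the disjoint union of `G₁` and `G₂` along the
identifications given by the relation `r` on vertices: the image of the disjoint union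
under the quotient map `Quot.mk r`. -/
def glueGraph {V₁ V₂ : Type*} (G₁ : SimpleGraph V₁) (G₂ : SimpleGraph V₂)
    (r : V₁ ⊕ V₂ → V₁ ⊕ V₂ → Prop) : SimpleGraph (Quot r) :=
  SimpleGraph.fromRel (fun x y =>
    ∃ a b : V₁ ⊕ V₂, (disjUnion G₁ G₂).Adj a b ∧ x = Quot.mk r a ∧ y = Quot.mk r b)

/-- The identifications for the parallel combination: `s₁` with `s₂` and `t₁` with `t₂`. -/
def parallelRel {V₁ V₂ : Type*} (s₁ t₁ : V₁) (s₂ t₂ : V₂) :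
    V₁ ⊕ V₂ → V₁ ⊕ V₂ → Prop := fun a b =>
  (a = Sum.inl s₁ ∧ b = Sum.inr s₂) ∨ (a = Sum.inl t₁ ∧ b = Sum.inr t₂)

/-
Reachability of `s` and `t` in the glued graph pushes forward from either side, since both
`Sum.inl` and `Sum.inr` followed by the quotient map send walks to walks. Conversely, with
`Q := G₁.Reachable s₁ t₁ ∨ G₂.Reachable s₂ t₂`, the predicate "reachable from `s₁` in `G₁`, or `Q`"
on `V₁` and its analogue on `V₂` is preserved by edges and agrees at both identified pairs
(at `t` both sides reduce to `Q`), so it holds at `t` whenever `t` is reachable from `s`.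
-/

section Glue

variable {V₁ V₂ : Type*} {G₁ : SimpleGraph V₁} {G₂ : SimpleGraph V₂}

@[simp]
lemma disjUnion_adj_inl_inl {x y : V₁} :
    (disjUnion G₁ G₂).Adj (Sum.inl x) (Sum.inl y) ↔ G₁.Adj x y := Iff.rfl

@[simp]
lemma disjUnion_adj_inr_inr {x y : V₂} :
    (disjUnion G₁ G₂).Adj (Sum.inr x) (Sum.inr y) ↔ G₂.Adj x y := Iff.rfl

@[simp]
lemma not_disjUnion_adj_inl_inr {x : V₁} {y : V₂} :
    ¬(disjUnion G₁ G₂).Adj (Sum.inl x) (Sum.inr y) := id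

@[simp]
lemma not_disjUnion_adj_inr_inl {x : V₂} {y : V₁} :
    ¬(disjUnion G₁ G₂).Adj (Sum.inr x) (Sum.inl y) := id

variable (G₁ G₂) in
def disjUnionInl : G₁ →g disjUnion G₁ G₂ where
  toFun := Sum.inl
  map_rel' := id

variable (G₁ G₂) in
def disjUnionInr : G₂ →g disjUnion G₁ G₂ where
  toFun := Sum.inr
  map_rel' := id

variable {r : V₁ ⊕ V₂ → V₁ ⊕ V₂ → Prop}

lemma glueGraph_reachable_mk_of_adj {a b : V₁ ⊕ V₂} (h : (disjUnion G₁ G₂).Adj a b) :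
    (glueGraph G₁ G₂ r).Reachable (Quot.mk r a) (Quot.mk r b) := by
  by_cases heq : Quot.mk r a = Quot.mk r b
  · rw [heq]
  · exact SimpleGraph.Adj.reachable ⟨heq, Or.inl ⟨a, b, h, rfl, rfl⟩⟩

lemma glueGraph_reachable_mk_of_reachable {a b : V₁ ⊕ V₂}
    (h : (disjUnion G₁ G₂).Reachable a b) :
    (glueGraph G₁ G₂ r).Reachable (Quot.mk r a) (Quot.mk r b) := by
  rw [SimpleGraph.reachable_iff_reflTransGen] at h ⊢
  refine Relation.ReflTransGen.lift' (Quot.mk r) (fun _ _ hab => ?_) a b h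
  exact (SimpleGraph.reachable_iff_reflTransGen _ _).mp (glueGraph_reachable_mk_of_adj hab)

lemma SimpleGraph.Reachable.glueGraph_inl {x y : V₁} (h : G₁.Reachable x y) :
    (glueGraph G₁ G₂ r).Reachable (Quot.mk r (Sum.inl x)) (Quot.mk r (Sum.inl y)) :=
  glueGraph_reachable_mk_of_reachable (h.map (disjUnionInl G₁ G₂))

lemma SimpleGraph.Reachable.glueGraph_inr {x y : V₂} (h : G₂.Reachable x y) :
    (glueGraph G₁ G₂ r).Reachable (Quot.mk r (Sum.inr x)) (Quot.mk r (Sum.inr y)) :=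
  glueGraph_reachable_mk_of_reachable (h.map (disjUnionInr G₁ G₂))

lemma of_glueGraph_reachable_mk (P : V₁ ⊕ V₂ → Prop) (hr : ∀ a b, r a b → (P a ↔ P b))
    (hadj : ∀ a b, (disjUnion G₁ G₂).Adj a b → P a → P b) {a b : V₁ ⊕ V₂}
    (h : (glueGraph G₁ G₂ r).Reachable (Quot.mk r a) (Quot.mk r b)) (ha : P a) : P b := by
  let P' : Quot r → Prop := Quot.lift P fun a b hab => propext (hr a b hab)
  suffices ∀ u v, (glueGraph G₁ G₂ r).Reachable u v → P' u → P' v from this _ _ h ha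
  intro u v huv
  rw [SimpleGraph.reachable_iff_reflTransGen] at huv
  induction huv with
  | refl => exact id
  | tail _ hvw ih =>
    obtain ⟨-, ⟨a, b, hab, rfl, rfl⟩ | ⟨a, b, hab, rfl, rfl⟩⟩ := hvw
    · exact hadj a b hab ∘ ih
    · exact hadj b a hab.symm ∘ ih

end Glue

/-- Parallel combination: identifying the two `s` vertices and the two `t` vertices of
`G₁` and `G₂`, the combined graph connects `s` to `t` iff `s₁, t₁` are connected in `G₁`
or `s₂, t₂` are connected in `G₂`. -/
theorem parallel_reachable_iff {V₁ V₂ : Type*} (G₁ : SimpleGraph V₁) (G₂ : SimpleGraph V₂)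
    (s₁ t₁ : V₁) (s₂ t₂ : V₂) :
    (glueGraph G₁ G₂ (parallelRel s₁ t₁ s₂ t₂)).Reachable
        (Quot.mk _ (Sum.inl s₁)) (Quot.mk _ (Sum.inl t₁)) ↔
      G₁.Reachable s₁ t₁ ∨ G₂.Reachable s₂ t₂ := by
  set r := parallelRel s₁ t₁ s₂ t₂
  set Q := G₁.Reachable s₁ t₁ ∨ G₂.Reachable s₂ t₂
  constructor
  · intro h
    let P : V₁ ⊕ V₂ → Prop :=
      Sum.elim (fun x => G₁.Reachable s₁ x ∨ Q) (fun y => G₂.Reachable s₂ y ∨ Q)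
    have hr : ∀ a b, r a b → (P a ↔ P b) := by
      rintro a b (⟨rfl, rfl⟩ | ⟨rfl, rfl⟩)
      · simp [P]
      · simp only [P, Q, Sum.elim_inl, Sum.elim_inr]
        tauto
    have hadj : ∀ a b, (disjUnion G₁ G₂).Adj a b → P a → P b := by
      rintro (x | x) (y | y) hxy <;> simp only [disjUnion_adj_inl_inl, disjUnion_adj_inr_inr,
        not_disjUnion_adj_inl_inr, not_disjUnion_adj_inr_inl] at hxy
      all_goals exact Or.imp_left (·.trans hxy.reachable)
    simpa [P, Q] using of_glueGraph_reachable_mk P hr hadj h (Or.inl .rfl)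
  · have hs : Quot.mk r (Sum.inl s₁) = Quot.mk r (Sum.inr s₂) := Quot.sound (Or.inl ⟨rfl, rfl⟩)
    have ht : Quot.mk r (Sum.inl t₁) = Quot.mk r (Sum.inr t₂) := Quot.sound (Or.inr ⟨rfl, rfl⟩)
    rintro (h | h)
    · exact h.glueGraph_inl
    · rw [hs, ht]
      exact h.glueGraph_inr
end
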